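/- If φ is a conditional density of X₁ given (X₂,…,X_d) and u₁ ≠ 0, then almost every t ∈ ℝ (with respect to the law of Z = Σ_j u_j X_j) satisfies E[X₁ | Z = t] = E[u₁⁻¹(t − Σ_{i=2}^d u_i X_i) · φ(u₁⁻¹(t − Σ_{j=2}^d u_j X_j), X₂,…,X_d)] / E[φ(u₁⁻¹(t − Σ_{j=2}^d u_j X_j), X₂,…,X_d)]. -/

import Mathlib

/-!
The joint law of `(X₁, Y)` is `φ(s, y) ds ⊗ P_Y(dy)`: on rectangles this is the defining identity,
once one knows that `∫ φ(s, y) ds < ∞` for `P_Y`-a.e. `y`. The shear `(s, y) ↦ (u₁ s + ⟨u, y⟩, y)`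
scales `ds ⊗ P_Y` by `|u₁|⁻¹`, so `(Z, Y)` has density `f(t, y) = |u₁|⁻¹ φ(u₁⁻¹(t - ⟨u, y⟩), y)`
with respect to `dt ⊗ P_Y`.

Whenever `(Z, Y)` has a density `f` with respect to `ρ ⊗ ν`, computing `E[h(Z, Y); Z ∈ S]` both
directly and through `E[h(Z, Y) | Z] = g(Z)` gives `g(t) ∫ f(t, y) dν = ∫ h(t, y) f(t, y) dν` for
`ρ`-a.e. `t`; and `∫ f(t, y) dν` is the density of the law of `Z`, so it vanishes only on a null set
of that law. Apply this with `h(t, y) = u₁⁻¹(t - ⟨u, y⟩)`, which recovers `X₁`; the constant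
`|u₁|⁻¹` cancels in the ratio.
-/

open MeasureTheory

/-- `φ : ℝ → (Fin m → ℝ) → ℝ` is a conditional density of `X₁` given the vector `Y`:
for all Borel `A ⊆ ℝ`, `B ⊆ ℝ^m`,
`P(X₁ ∈ A, Y ∈ B) = E[1_{Y ∈ B} ∫_A φ(t, Y) dt]`. -/
def IsCondDensity {Ω : Type*} [MeasurableSpace Ω] (μ : Measure Ω)
    {m : ℕ} (X1 : Ω → ℝ) (Y : Ω → (Fin m → ℝ)) (φ : ℝ → (Fin m → ℝ) → ℝ) : Prop :=
  Measurable (Function.uncurry φ) ∧ (∀ t x, 0 ≤ φ t x) ∧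
    ∀ A : Set ℝ, MeasurableSet A → ∀ B : Set (Fin m → ℝ), MeasurableSet B →
      (μ {ω | X1 ω ∈ A ∧ Y ω ∈ B}).toReal
        = ∫ ω in {ω | Y ω ∈ B}, ∫ t in A, φ t (Y ω) ∂(volume) ∂μ

open scoped ENNReal

section JointDensity

variable {Ω α β : Type*} [MeasurableSpace Ω] [MeasurableSpace α] [MeasurableSpace β]
  {μ : Measure Ω} {ρ : Measure α} {ν : Measure β}
  {Z : Ω → α} {Y : Ω → β} {f : α × β → ℝ}

lemma integrable_mul_of_map_eq_withDensity (hZ : Measurable Z) (hY : Measurable Y)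
    (hf : Measurable f) (hf0 : ∀ p, 0 ≤ f p)
    (hlaw : μ.map (fun ω => (Z ω, Y ω)) = (ρ.prod ν).withDensity fun p => ENNReal.ofReal (f p))
    (k : α × β → ℝ) (hk : Measurable k) (hki : Integrable (fun ω => k (Z ω, Y ω)) μ) :
    Integrable (fun p => k p * f p) (ρ.prod ν) := by
  have h := (integrable_map_measure hk.aestronglyMeasurable
    (hZ.prodMk hY).aemeasurable).mpr hki
  rw [hlaw, integrable_withDensity_iff_integrable_smul' hf.ennreal_ofReal
    (ae_of_all _ fun _ => ENNReal.ofReal_lt_top)] at h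
  simpa only [ENNReal.toReal_ofReal (hf0 _), smul_eq_mul, mul_comm] using h

lemma setIntegral_preimage_eq_of_map_eq_withDensity [SFinite ρ] [SFinite ν]
    (hZ : Measurable Z) (hY : Measurable Y)
    (hf : Measurable f) (hf0 : ∀ p, 0 ≤ f p)
    (hlaw : μ.map (fun ω => (Z ω, Y ω)) = (ρ.prod ν).withDensity fun p => ENNReal.ofReal (f p))
    (k : α × β → ℝ) (hk : Measurable k) (hki : Integrable (fun ω => k (Z ω, Y ω)) μ)
    {S : Set α} (hS : MeasurableSet S) :
    ∫ ω in Z ⁻¹' S, k (Z ω, Y ω) ∂μ = ∫ t in S, ∫ y, k (t, y) * f (t, y) ∂ν ∂ρ := by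
  have hint := integrable_mul_of_map_eq_withDensity hZ hY hf hf0 hlaw k hk hki
  have hpre : Z ⁻¹' S = (fun ω => (Z ω, Y ω)) ⁻¹' (S ×ˢ Set.univ) := by ext; simp
  rw [hpre, ← setIntegral_map (hS.prod .univ) hk.aestronglyMeasurable
    (hZ.prodMk hY).aemeasurable, hlaw, setIntegral_withDensity_eq_setIntegral_toReal_smul
      hf.ennreal_ofReal (ae_of_all _ fun _ => ENNReal.ofReal_lt_top) _ (hS.prod .univ),
    setIntegral_prod _ (by simpa only [ENNReal.toReal_ofReal (hf0 _), smul_eq_mul, mul_comm]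
      using hint.integrableOn)]
  simp only [Measure.restrict_univ, ENNReal.toReal_ofReal (hf0 _), smul_eq_mul, mul_comm]

lemma measureReal_preimage_eq_of_map_eq_withDensity [IsFiniteMeasure μ] [SFinite ρ] [SFinite ν]
    (hZ : Measurable Z) (hY : Measurable Y) (hf : Measurable f) (hf0 : ∀ p, 0 ≤ f p)
    (hlaw : μ.map (fun ω => (Z ω, Y ω)) = (ρ.prod ν).withDensity fun p => ENNReal.ofReal (f p))
    {S : Set α} (hS : MeasurableSet S) :
    μ.real (Z ⁻¹' S) = ∫ t in S, ∫ y, f (t, y) ∂ν ∂ρ := by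
  simpa using setIntegral_preimage_eq_of_map_eq_withDensity hZ hY hf hf0 hlaw _ measurable_const
    (integrable_const (1 : ℝ)) hS

lemma map_absolutelyContinuous_of_map_eq_withDensity [IsFiniteMeasure μ] [SFinite ρ]
    [SFinite ν] (hZ : Measurable Z) (hY : Measurable Y) (hf : Measurable f) (hf0 : ∀ p, 0 ≤ f p)
    (hlaw : μ.map (fun ω => (Z ω, Y ω)) = (ρ.prod ν).withDensity fun p => ENNReal.ofReal (f p)) :
    μ.map Z ≪ ρ := by
  refine Measure.AbsolutelyContinuous.mk fun S hS hρS => ?_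
  rw [Measure.map_apply hZ hS, ← measureReal_eq_zero_iff,
    measureReal_preimage_eq_of_map_eq_withDensity hZ hY hf hf0 hlaw hS,
    Measure.restrict_eq_zero.mpr hρS, integral_zero_measure]

lemma ae_integral_ne_zero_of_map_eq_withDensity [IsFiniteMeasure μ] [SFinite ρ] [SFinite ν]
    (hZ : Measurable Z) (hY : Measurable Y) (hf : Measurable f) (hf0 : ∀ p, 0 ≤ f p)
    (hlaw : μ.map (fun ω => (Z ω, Y ω)) = (ρ.prod ν).withDensity fun p => ENNReal.ofReal (f p)) :
    ∀ᵐ t ∂μ.map Z, ∫ y, f (t, y) ∂ν ≠ 0 := by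
  have hS : MeasurableSet {t | ∫ y, f (t, y) ∂ν = 0} :=
    hf.stronglyMeasurable.integral_prod_right'.measurable (measurableSet_singleton 0)
  rw [ae_iff, Measure.map_apply hZ (by simpa using hS), ← measureReal_eq_zero_iff]
  simp only [not_not]
  rw [measureReal_preimage_eq_of_map_eq_withDensity hZ hY hf hf0 hlaw hS,
    setIntegral_congr_fun hS fun t ht => ht, integral_zero]

lemma ae_eq_integral_mul_div_integral_of_condExp [IsFiniteMeasure μ] [SigmaFinite ρ]
    [SFinite ν] (hZ : Measurable Z) (hY : Measurable Y) (hf : Measurable f) (hf0 : ∀ p, 0 ≤ f p)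
    (hlaw : μ.map (fun ω => (Z ω, Y ω)) = (ρ.prod ν).withDensity fun p => ENNReal.ofReal (f p))
    {h : α × β → ℝ} (hh : Measurable h) (hhi : Integrable (fun ω => h (Z ω, Y ω)) μ)
    {g : α → ℝ} (hg : Measurable g)
    (hgh : (fun ω => g (Z ω)) =ᵐ[μ] μ[fun ω => h (Z ω, Y ω) | MeasurableSpace.comap Z ‹_›]) :
    ∀ᵐ t ∂μ.map Z, g t = (∫ y, h (t, y) * f (t, y) ∂ν) / ∫ y, f (t, y) ∂ν := by
  set D : α → ℝ := fun t => ∫ y, f (t, y) ∂ν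
  set N : α → ℝ := fun t => ∫ y, h (t, y) * f (t, y) ∂ν
  have hgi : Integrable (fun ω => g (Z ω)) μ := integrable_condExp.congr hgh.symm
  have hsetIntegral := setIntegral_preimage_eq_of_map_eq_withDensity hZ hY hf hf0 hlaw
  have hintegrable := integrable_mul_of_map_eq_withDensity hZ hY hf hf0 hlaw
  have hgD_eq_N : (fun t => g t * D t) =ᵐ[ρ] N := by
    have hgDi : Integrable (fun t => g t * D t) ρ := by
      simpa only [D, mul_assoc, integral_const_mul] using
        (hintegrable (fun p => g p.1) (hg.comp measurable_fst) hgi).integral_prod_left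
    refine ae_eq_of_forall_setIntegral_eq_of_sigmaFinite (fun _ _ _ => hgDi.integrableOn)
      (fun _ _ _ => (hintegrable _ hh hhi).integral_prod_left.integrableOn) fun S hS _ => ?_
    have hS' : MeasurableSet[MeasurableSpace.comap Z ‹_›] (Z ⁻¹' S) := ⟨S, hS, rfl⟩
    calc ∫ t in S, g t * D t ∂ρ = ∫ ω in Z ⁻¹' S, g (Z ω) ∂μ := by
          simp only [D, ← integral_const_mul]
          exact (hsetIntegral (fun p => g p.1) (hg.comp measurable_fst) hgi hS).symm
      _ = ∫ ω in Z ⁻¹' S, h (Z ω, Y ω) ∂μ := by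
          rw [setIntegral_congr_ae (hZ hS) (hgh.mono fun _ hω _ => hω),
            setIntegral_condExp hZ.comap_le hhi hS']
      _ = ∫ t in S, N t ∂ρ := hsetIntegral _ hh hhi hS
  filter_upwards [(map_absolutelyContinuous_of_map_eq_withDensity hZ hY hf hf0 hlaw).ae_le
    hgD_eq_N, ae_integral_ne_zero_of_map_eq_withDensity hZ hY hf hf0 hlaw] with t hN hD
  exact eq_div_of_mul_eq hD hN

end JointDensity

lemma map_withDensity_comp {α β : Type*} [MeasurableSpace α] [MeasurableSpace β]
    {ρ : Measure α} {T : α → β} (hT : Measurable T) {G : β → ℝ≥0∞} (hG : Measurable G) :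
    (ρ.withDensity (G ∘ T)).map T = (ρ.map T).withDensity G := by
  ext E hE
  rw [Measure.map_apply hT hE, withDensity_apply _ (hT hE), withDensity_apply _ hE,
    setLIntegral_map hE hG hT]
  rfl

lemma map_affine_prod_volume {β : Type*} [MeasurableSpace β] {ν : Measure β} [SFinite ν]
    {a : ℝ} (ha : a ≠ 0) {c : β → ℝ} (hc : Measurable c) :
    ((volume : Measure ℝ).prod ν).map (fun p => (a * p.1 + c p.2, p.2))
      = ENNReal.ofReal |a⁻¹| • (volume : Measure ℝ).prod ν := by
  have hT : Measurable fun p : ℝ × β => (a * p.1 + c p.2, p.2) := by fun_prop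
  ext E hE
  rw [Measure.map_apply hT hE, Measure.smul_apply, Measure.prod_apply_symm (hT hE),
    Measure.prod_apply_symm hE, smul_eq_mul, ← lintegral_const_mul' _ _ ENNReal.ofReal_ne_top]
  refine lintegral_congr fun y => ?_
  have hmap : (volume : Measure ℝ).map (fun s => a * s + c y)
      = ENNReal.ofReal |a⁻¹| • volume := by
    rw [show (fun s => a * s + c y) = (· + c y) ∘ (a * ·) from rfl,
      ← Measure.map_map (measurable_add_const (c y)) (measurable_const_mul a),
      Real.map_volume_mul_left ha, Measure.map_smul, map_add_right_eq_self]
  rw [← smul_eq_mul, ← Measure.smul_apply, ← hmap,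
    Measure.map_apply (by fun_prop) (measurable_prodMk_right hE)]
  rfl

namespace IsCondDensity

variable {Ω : Type*} [MeasurableSpace Ω] {μ : Measure Ω} {m : ℕ} {X1 : Ω → ℝ}
  {Y : Ω → Fin m → ℝ} {φ : ℝ → (Fin m → ℝ) → ℝ}

lemma measurable_comp (hφ : IsCondDensity μ X1 Y φ) {α : Type*} [MeasurableSpace α]
    {F : α → ℝ} {G : α → Fin m → ℝ} (hF : Measurable F) (hG : Measurable G) :
    Measurable fun x => φ (F x) (G x) :=
  hφ.1.comp (hF.prodMk hG)

lemma measurable_setLIntegral (hφ : IsCondDensity μ X1 Y φ) (A : Set ℝ) :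
    Measurable fun y => ∫⁻ s in A, ENNReal.ofReal (φ s y) :=
  (hφ.1.ennreal_ofReal).lintegral_prod_left'

lemma measureReal_inter_preimage (hφ : IsCondDensity μ X1 Y φ) (hY : Measurable Y)
    {A : Set ℝ} (hA : MeasurableSet A) {B : Set (Fin m → ℝ)} (hB : MeasurableSet B) :
    μ.real (X1 ⁻¹' A ∩ Y ⁻¹' B)
      = ∫ y in B, (∫⁻ s in A, ENNReal.ofReal (φ s y)).toReal ∂μ.map Y := by
  rw [setIntegral_map hB (hφ.measurable_setLIntegral A).ennreal_toReal.aestronglyMeasurable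
    hY.aemeasurable]
  refine (hφ.2.2 A hA B hB).trans (integral_congr_ae (ae_of_all _ fun ω => ?_))
  exact integral_eq_lintegral_of_nonneg_ae (ae_of_all _ fun s => hφ.2.1 s _)
    (hφ.1.comp measurable_prodMk_right).aestronglyMeasurable

lemma ae_lintegral_lt_top [IsFiniteMeasure μ] (hφ : IsCondDensity μ X1 Y φ)
    (hY : Measurable Y) :
    ∀ᵐ y ∂μ.map Y, ∫⁻ s, ENNReal.ofReal (φ s y) < ∞ := by
  have hB := hφ.measurable_setLIntegral .univ (measurableSet_singleton ∞)
  -- where the inner integral is `∞` its `toReal` is `0`, so `Y` lies there with probability `0`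
  have h := hφ.measureReal_inter_preimage hY .univ hB
  rw [setIntegral_congr_fun hB fun y hy => by rw [Set.mem_preimage.mp hy],
    ENNReal.toReal_top, integral_zero,
    measureReal_eq_zero_iff, Set.preimage_univ, Set.univ_inter, ← Measure.map_apply hY hB] at h
  simpa [ae_iff, Set.preimage] using h

lemma map_prodMk_eq_withDensity [IsProbabilityMeasure μ] (hφ : IsCondDensity μ X1 Y φ)
    (hX1 : Measurable X1) (hY : Measurable Y) :
    μ.map (fun ω => (X1 ω, Y ω))
      = ((volume : Measure ℝ).prod (μ.map Y)).withDensity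
          fun p => ENNReal.ofReal (φ p.1 p.2) := by
  set ρ := ((volume : Measure ℝ).prod (μ.map Y)).withDensity fun p => ENNReal.ofReal (φ p.1 p.2)
  have hreal : ∀ A, MeasurableSet A → ∀ B, MeasurableSet B →
      μ.real (X1 ⁻¹' A ∩ Y ⁻¹' B) = (ρ (A ×ˢ B)).toReal := by
    intro A hA B hB
    rw [hφ.measureReal_inter_preimage hY hA hB, withDensity_apply _ (hA.prod hB),
      ← Measure.prod_restrict,
      lintegral_prod_symm (fun p => ENNReal.ofReal (φ p.1 p.2)) hφ.1.ennreal_ofReal.aemeasurable,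
      integral_toReal (hφ.measurable_setLIntegral A).aemeasurable (ae_restrict_of_ae <|
        (hφ.ae_lintegral_lt_top hY).mono fun y hy => (setLIntegral_le_lintegral _ _).trans_lt hy)]
  have hρ_univ : ρ Set.univ ≠ ∞ := by
    intro h
    simpa [h] using hreal _ .univ _ .univ
  have hrect : ∀ A, MeasurableSet A → ∀ B, MeasurableSet B →
      μ.map (fun ω => (X1 ω, Y ω)) (A ×ˢ B) = ρ (A ×ˢ B) := by
    intro A hA B hB
    rw [Measure.map_apply (hX1.prodMk hY) (hA.prod hB), Set.mk_preimage_prod]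
    exact (ENNReal.toReal_eq_toReal_iff' (measure_ne_top _ _)
      (ne_top_of_le_ne_top hρ_univ (measure_mono (Set.subset_univ _)))).mp (hreal A hA B hB)
  refine ext_of_generate_finite _ generateFrom_prod.symm isPiSystem_prod ?_ ?_
  · rintro _ ⟨A, hA, B, hB, rfl⟩
    exact hrect A hA B hB
  · simpa using hrect _ .univ _ .univ

lemma map_affine_prodMk_eq_withDensity [IsProbabilityMeasure μ] (hφ : IsCondDensity μ X1 Y φ)
    (hX1 : Measurable X1) (hY : Measurable Y) {a : ℝ} (ha : a ≠ 0) {c : (Fin m → ℝ) → ℝ}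
    (hc : Measurable c) :
    μ.map (fun ω => (a * X1 ω + c (Y ω), Y ω))
      = ((volume : Measure ℝ).prod (μ.map Y)).withDensity
          fun p => ENNReal.ofReal (|a|⁻¹ * φ (a⁻¹ * (p.1 - c p.2)) p.2) := by
  set T := fun p : ℝ × (Fin m → ℝ) => (a * p.1 + c p.2, p.2)
  set G := fun p : ℝ × (Fin m → ℝ) => ENNReal.ofReal (φ (a⁻¹ * (p.1 - c p.2)) p.2)
  have hT : Measurable T := by fun_prop
  have hG : Measurable G := (hφ.measurable_comp (by fun_prop) measurable_snd).ennreal_ofReal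
  have hGT : G ∘ T = fun p => ENNReal.ofReal (φ p.1 p.2) := by
    funext p
    simp [G, T, ha]
  calc μ.map (fun ω => T (X1 ω, Y ω))
      = (((volume : Measure ℝ).prod (μ.map Y)).withDensity (G ∘ T)).map T := by
        rw [hGT, ← hφ.map_prodMk_eq_withDensity hX1 hY, Measure.map_map hT (hX1.prodMk hY)]
        rfl
    _ = _ := by
        rw [map_withDensity_comp hT hG, map_affine_prod_volume ha hc, withDensity_smul_measure,
          ← withDensity_smul' _ _ ENNReal.ofReal_ne_top]
        congr with p
        simp [G, ENNReal.ofReal_mul, abs_inv]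

end IsCondDensity

theorem stmt7_general {Ω : Type*} [MeasurableSpace Ω] (μ : Measure Ω) [IsProbabilityMeasure μ]
    (m : ℕ)
    (X1 : Ω → ℝ) (Y : Ω → (Fin m → ℝ)) (hX1 : Measurable X1) (hY : Measurable Y)
    (hX1int : Integrable X1 μ)
    (φ : ℝ → (Fin m → ℝ) → ℝ) (hφ : IsCondDensity μ X1 Y φ)
    (u1 : ℝ) (hu1 : u1 ≠ 0) (u : Fin m → ℝ)
    (Z : Ω → ℝ) (hZ : Z = fun ω => u1 * X1 ω + ∑ i, u i * Y ω i)
    (g : ℝ → ℝ) (hg : Measurable g)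
    (hfact : (fun ω => g (Z ω)) =ᵐ[μ] μ[X1 | MeasurableSpace.comap Z (borel ℝ)]) :
    ∀ᵐ t ∂(μ.map Z),
      g t = (∫ ω, (u1⁻¹ * (t - ∑ j, u j * Y ω j))
                * φ (u1⁻¹ * (t - ∑ j, u j * Y ω j)) (Y ω) ∂μ)
              / (∫ ω, φ (u1⁻¹ * (t - ∑ j, u j * Y ω j)) (Y ω) ∂μ) := by
  set c : (Fin m → ℝ) → ℝ := fun y => ∑ i, u i * y i
  have hc : Measurable c := by fun_prop
  have hZm : Measurable Z := hZ ▸ by fun_prop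
  have hlaw : μ.map (fun ω => (Z ω, Y ω)) = ((volume : Measure ℝ).prod (μ.map Y)).withDensity
      fun p => ENNReal.ofReal (|u1|⁻¹ * φ (u1⁻¹ * (p.1 - c p.2)) p.2) := by
    subst hZ
    exact hφ.map_affine_prodMk_eq_withDensity hX1 hY hu1 hc
  have hX1_eq : X1 = fun ω => u1⁻¹ * (Z ω - c (Y ω)) := by
    subst hZ
    funext ω
    field_simp
    ring
  rw [hX1_eq] at hX1int hfact
  have hratio := ae_eq_integral_mul_div_integral_of_condExp hZm hY
    (f := fun p => |u1|⁻¹ * φ (u1⁻¹ * (p.1 - c p.2)) p.2)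
    (measurable_const.mul (hφ.measurable_comp (by fun_prop) measurable_snd))
    (fun p => mul_nonneg (by positivity) (hφ.2.1 _ _)) hlaw
    (h := fun p => u1⁻¹ * (p.1 - c p.2)) (by fun_prop) hX1int hg hfact
  filter_upwards [hratio] with t ht
  have hmeas : Measurable fun y => φ (u1⁻¹ * (t - c y)) y :=
    hφ.measurable_comp (by fun_prop) measurable_id
  simp_rw [ht, mul_left_comm _ |u1|⁻¹, integral_const_mul,
    mul_div_mul_left _ _ (inv_ne_zero (abs_ne_zero.mpr hu1))]
  rw [integral_map (f := fun y => u1⁻¹ * (t - c y) * φ (u1⁻¹ * (t - c y)) y) hY.aemeasurable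
      ((by fun_prop : Measurable fun y => u1⁻¹ * (t - c y)).mul hmeas).aestronglyMeasurable,
    integral_map hY.aemeasurable hmeas.aestronglyMeasurable]

/-- If `φ` is a conditional density of `X₁` given `(X₂,…,X_d)`, the vector is integrable and
`u₁ ≠ 0`, then for a.e. `t` w.r.t. the law of `Z = Σ_j u_j X_j`, `E[X₁ | Z = t]` equals
`E[u₁⁻¹(t - Σ_{i≥2} u_i X_i) φ(u₁⁻¹(t - Σ_{j≥2} u_j X_j), X₂,…,X_d)] / E[φ(…)]`. -/
theorem stmt7 {Ω : Type*} [MeasurableSpace Ω] (μ : Measure Ω) [IsProbabilityMeasure μ]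
    (m : ℕ) (hm : 1 ≤ m)
    (X1 : Ω → ℝ) (Y : Ω → (Fin m → ℝ)) (hX1 : Measurable X1) (hY : Measurable Y)
    (hX1int : Integrable X1 μ) (hYint : ∀ i, Integrable (fun ω => Y ω i) μ)
    (φ : ℝ → (Fin m → ℝ) → ℝ) (hφ : IsCondDensity μ X1 Y φ)
    (u1 : ℝ) (hu1 : u1 ≠ 0) (u : Fin m → ℝ)
    (Z : Ω → ℝ) (hZ : Z = fun ω => u1 * X1 ω + ∑ i, u i * Y ω i)
    (g : ℝ → ℝ) (hg : Measurable g)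
    (hfact : (fun ω => g (Z ω)) =ᵐ[μ] μ[X1 | MeasurableSpace.comap Z (borel ℝ)]) :
    ∀ᵐ t ∂(μ.map Z),
      g t = (∫ ω, (u1⁻¹ * (t - ∑ j, u j * Y ω j))
                * φ (u1⁻¹ * (t - ∑ j, u j * Y ω j)) (Y ω) ∂μ)
              / (∫ ω, φ (u1⁻¹ * (t - ∑ j, u j * Y ω j)) (Y ω) ∂μ) :=
  stmt7_general μ m X1 Y hX1 hY hX1int φ hφ u1 hu1 u Z hZ g hg hfact
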